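/- arXiv:1505.01305 — 2 statements merged into one kernel-verified Lean document; each statement's English description precedes it below -/
import Mathlib

section
/- Define μ recursively on finite strings in {1,2}* by μ(i) = 1/2 for i ∈ {1,2}, μ(j₁,j₂) = (1 - β_{j₁}β_{j₂})/4, and μ(k₀,k₁,...,kₙ) = a(k₀,k₁)·μ(k₁,...,kₙ) + b(k₀,k₁)·μ(k₂,...,kₙ), where a(i,j) = (1/2)(1 - βᵢ/βⱼ) and b(i,j) = (βᵢ/4)(1/βⱼ - βⱼ), β₁ = sin(2θ) ∈ (0,1), β₂ = -β₁. Then for every string, μ(k₀,...,kₙ) = μ(1,k₀,...,kₙ) + μ(2,k₀,...,kₙ), i.e., the family of cylinder measures is consistent under prepending. -/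
/-! Since β₁ + β₂ = 0, the coefficients satisfy a(1,j) + a(2,j) = 1 and b(1,j) + b(2,j) = 0,
so summing the defining recursion over the prepended symbol returns μ(k₀,...,kₙ) itself. -/

open Real

/-- β₁ = sin 2θ, β₂ = -sin 2θ (symbol 0 stands for "1", symbol 1 for "2"). -/
noncomputable def beta (θ : ℝ) : Fin 2 → ℝ := ![sin (2 * θ), -sin (2 * θ)]

/-- a(i,j) = (1/2)(1 - βᵢ/βⱼ). -/
noncomputable def aCoef (θ : ℝ) (i j : Fin 2) : ℝ := (1 / 2) * (1 - beta θ i / beta θ j)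

/-- b(i,j) = (βᵢ/4)(1/βⱼ - βⱼ). -/
noncomputable def bCoef (θ : ℝ) (i j : Fin 2) : ℝ :=
  (beta θ i / 4) * (1 / beta θ j - beta θ j)

/-- The cylinder measure μ on finite strings over {1,2}. -/
noncomputable def mu (θ : ℝ) : List (Fin 2) → ℝ
  | [] => 1
  | [_] => 1 / 2
  | [i, j] => (1 - beta θ i * beta θ j) / 4
  | k0 :: k1 :: k2 :: rest =>
      aCoef θ k0 k1 * mu θ (k1 :: k2 :: rest) + bCoef θ k0 k1 * mu θ (k2 :: rest)

theorem beta_zero_add_beta_one (θ : ℝ) : beta θ 0 + beta θ 1 = 0 := by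
  simp [beta]

theorem beta_ne_zero {θ : ℝ} (hθ : θ ∈ Set.Ioo 0 (π / 2)) (k : Fin 2) : beta θ k ≠ 0 := by
  have hsin : sin (2 * θ) ≠ 0 :=
    (sin_pos_of_pos_of_lt_pi (by linarith [hθ.1]) (by linarith [hθ.2])).ne'
  fin_cases k <;> simpa [beta] using hsin

theorem aCoef_zero_add_aCoef_one {θ : ℝ} {k : Fin 2} (hk : beta θ k ≠ 0) :
    aCoef θ 0 k + aCoef θ 1 k = 1 := by
  have hsum := beta_zero_add_beta_one θ
  unfold aCoef
  field_simp
  linear_combination -hsum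

theorem bCoef_zero_add_bCoef_one (θ : ℝ) (k : Fin 2) : bCoef θ 0 k + bCoef θ 1 k = 0 := by
  have hsum := beta_zero_add_beta_one θ
  unfold bCoef
  linear_combination (1 / beta θ k - beta θ k) / 4 * hsum

theorem mu_pair_zero_add_mu_pair_one (θ : ℝ) (k : Fin 2) : mu θ [0, k] + mu θ [1, k] = 1 / 2 := by
  have hsum := beta_zero_add_beta_one θ
  simp only [mu]
  linear_combination -beta θ k / 4 * hsum

theorem mu_consistent_prepend_general (θ : ℝ) (hθ : θ ∈ Set.Ioo 0 (π / 2))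
    (k : Fin 2) (l : List (Fin 2)) :
    mu θ (k :: l) = mu θ (0 :: k :: l) + mu θ (1 :: k :: l) := by
  cases l with
  | nil => exact (mu_pair_zero_add_mu_pair_one θ k).symm
  | cons j rest =>
    have ha := aCoef_zero_add_aCoef_one (beta_ne_zero hθ k)
    have hb := bCoef_zero_add_bCoef_one θ k
    simp only [mu]
    linear_combination -(mu θ (k :: j :: rest)) * ha - mu θ (j :: rest) * hb

/-- Consistency of the cylinder measures under prepending:
μ(k₀,...,kₙ) = μ(1,k₀,...,kₙ) + μ(2,k₀,...,kₙ). -/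
theorem mu_consistent_prepend (θ : ℝ) (hθ : θ ∈ Set.Ioo 0 (π / 2)) (hθ' : θ ≠ π / 4)
    (k : Fin 2) (l : List (Fin 2)) :
    mu θ (k :: l) = mu θ (0 :: k :: l) + mu θ (1 :: k :: l) :=
  mu_consistent_prepend_general θ hθ k l
end

section
/- Let γ ∈ (0,1/4) and p = (1+√(1-4γ))/2. For the map f₁(x) = 1 - 1/(γ⁻¹ - 1/x) on (1-p, p], the fixed point p is a global attractor: for every x ∈ (1-p, p], the iterates f₁ⁿ(x) converge to p. Symmetrically, for f₂(x) = 1/(γ⁻¹ - 1/(1-x)) on [1-p, p), the iterates converge to 1-p. -/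
noncomputable def f₁ (γ x : ℝ) : ℝ := 1 - 1 / (γ⁻¹ - 1 / x)

noncomputable def f₂ (γ x : ℝ) : ℝ := 1 / (γ⁻¹ - 1 / (1 - x))

/-!
Write `γ = p (1 - p)`. Then `p - f₁ x = (1 - p)² (p - x) / (x - γ)` and
`f₁ x - x = (p - x) (x - (1 - p)) / (x - γ)`, so for `1 - p < x ≤ p` the orbit of `x` stays in
`[x, p]`, on which the distance to `p` shrinks at least by the factor `(1 - p)² / (x - γ) < 1`
(note `x - γ - (1 - p)² = x - (1 - p)`). The map `y ↦ 1 - y` conjugates `f₂` to `f₁`.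
-/

open Set Filter Topology

theorem tendsto_iterate_of_dist_le_mul {α : Type*} [PseudoMetricSpace α] {f : α → α}
    {s : Set α} {p : α} {c : ℝ} (hs : MapsTo f s s) (hc₀ : 0 ≤ c) (hc₁ : c < 1)
    (hf : ∀ a ∈ s, dist (f a) p ≤ c * dist a p) {x : α} (hx : x ∈ s) :
    Tendsto (fun n ↦ f^[n] x) atTop (𝓝 p) := by
  have hbound : ∀ n : ℕ, dist (f^[n] x) p ≤ c ^ n * dist x p := by
    intro n
    induction n with
    | zero => simp
    | succ n ih =>
      rw [Function.iterate_succ_apply', pow_succ', mul_assoc]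
      exact (hf _ (hs.iterate n hx)).trans (mul_le_mul_of_nonneg_left ih hc₀)
  refine tendsto_iff_dist_tendsto_zero.2 (squeeze_zero (fun _ ↦ dist_nonneg) hbound ?_)
  simpa using (tendsto_pow_atTop_nhds_zero_of_lt_one hc₀ hc₁).mul_const (dist x p)

theorem one_sub_f₂ (γ y : ℝ) : 1 - f₂ γ y = f₁ γ (1 - y) := by
  simp [f₁, f₂]

theorem iterate_f₂_eq (γ : ℝ) (n : ℕ) (y : ℝ) : (f₂ γ)^[n] y = 1 - (f₁ γ)^[n] (1 - y) := by
  have hconj : Function.Semiconj (fun y ↦ 1 - y) (f₂ γ) (f₁ γ) := one_sub_f₂ γ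
  linarith [hconj.iterate_right n y]

section f₁

variable {p x : ℝ}

theorem sub_f₁_eq (hp₀ : p ≠ 0) (hp₁ : p ≠ 1) (hx₀ : x ≠ 0) (hx : x ≠ p * (1 - p)) :
    p - f₁ (p * (1 - p)) x = (1 - p) ^ 2 * (p - x) / (x - p * (1 - p)) := by
  have : 1 - p ≠ 0 := sub_ne_zero.2 (Ne.symm hp₁)
  have : x - p * (1 - p) ≠ 0 := sub_ne_zero.2 hx
  unfold f₁
  field_simp
  ring

theorem f₁_sub_eq (hp₀ : p ≠ 0) (hp₁ : p ≠ 1) (hx₀ : x ≠ 0) (hx : x ≠ p * (1 - p)) :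
    f₁ (p * (1 - p)) x - x = (p - x) * (x - (1 - p)) / (x - p * (1 - p)) := by
  have : 1 - p ≠ 0 := sub_ne_zero.2 (Ne.symm hp₁)
  have : x - p * (1 - p) ≠ 0 := sub_ne_zero.2 hx
  unfold f₁
  field_simp
  ring

variable (hp : 1 / 2 < p) (hp₁ : p < 1) (hx : 1 - p < x)
include hp hp₁ hx

theorem mapsTo_f₁_Icc : MapsTo (f₁ (p * (1 - p))) (Icc x p) (Icc x p) := by
  rintro a ⟨hxa, hap⟩
  have hγa : (1 - p) ^ 2 < a - p * (1 - p) := by nlinarith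
  have hne : a ≠ p * (1 - p) := by nlinarith
  have hp₀ : p ≠ 0 := by linarith
  have hp₁' : p ≠ 1 := by linarith
  have ha₀ : a ≠ 0 := by nlinarith
  have hup := sub_f₁_eq hp₀ hp₁' ha₀ hne
  have hlow := f₁_sub_eq hp₀ hp₁' ha₀ hne
  have hden : 0 < a - p * (1 - p) := by nlinarith
  constructor
  · have : 0 ≤ (p - a) * (a - (1 - p)) / (a - p * (1 - p)) :=
      div_nonneg (mul_nonneg (by linarith) (by linarith)) hden.le
    linarith
  · have : 0 ≤ (1 - p) ^ 2 * (p - a) / (a - p * (1 - p)) :=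
      div_nonneg (mul_nonneg (sq_nonneg _) (by linarith)) hden.le
    linarith

theorem sub_f₁_le {a : ℝ} (ha : a ∈ Icc x p) :
    p - f₁ (p * (1 - p)) a ≤ (1 - p) ^ 2 / (x - p * (1 - p)) * (p - a) := by
  obtain ⟨hxa, hap⟩ := ha
  rw [sub_f₁_eq (by linarith) (by linarith) (by nlinarith) (by nlinarith), div_mul_eq_mul_div]
  exact div_le_div_of_nonneg_left (mul_nonneg (sq_nonneg _) (by linarith)) (by nlinarith)
    (by linarith)

end f₁

theorem tendsto_iterate_f₁ {p x : ℝ} (hp : 1 / 2 < p) (hp₁ : p < 1) (hx : x ∈ Ioc (1 - p) p) :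
    Tendsto (fun n ↦ (f₁ (p * (1 - p)))^[n] x) atTop (𝓝 p) := by
  have hden : (1 - p) ^ 2 < x - p * (1 - p) := by nlinarith [hx.1]
  have hden₀ : 0 < x - p * (1 - p) := lt_of_le_of_lt (sq_nonneg _) hden
  refine tendsto_iterate_of_dist_le_mul (mapsTo_f₁_Icc hp hp₁ hx.1) (by positivity)
    ((div_lt_one hden₀).2 hden) (fun a ha ↦ ?_) (left_mem_Icc.2 hx.2)
  have hfa := (mapsTo_f₁_Icc hp hp₁ hx.1 ha).2
  rw [Real.dist_eq, Real.dist_eq, abs_sub_comm, abs_of_nonneg (sub_nonneg.2 hfa), abs_sub_comm,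
    abs_of_nonneg (sub_nonneg.2 ha.2)]
  exact sub_f₁_le hp hp₁ hx.1 ha

theorem eq_mul_one_sub_of_eq_sqrt {γ p : ℝ} (hγ : γ ∈ Ioo 0 (1 / 4))
    (hp : p = (1 + √(1 - 4 * γ)) / 2) : 1 / 2 < p ∧ p < 1 ∧ γ = p * (1 - p) := by
  obtain ⟨hγ₀, hγ₁⟩ := hγ
  have hsq : √(1 - 4 * γ) ^ 2 = 1 - 4 * γ := Real.sq_sqrt (by linarith)
  have hpos : 0 < √(1 - 4 * γ) := Real.sqrt_pos.2 (by linarith)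
  have hlt : √(1 - 4 * γ) < 1 := by nlinarith
  subst hp
  exact ⟨by linarith, by linarith, by nlinarith⟩

/-- For γ ∈ (0,1/4) and p = (1+√(1-4γ))/2: p is a global attractor of f₁ on
(1-p, p], and 1-p is a global attractor of f₂ on [1-p, p). -/
theorem f_global_attractors (γ : ℝ) (hγ : γ ∈ Set.Ioo 0 (1 / 4))
    (p : ℝ) (hp : p = (1 + Real.sqrt (1 - 4 * γ)) / 2) :
    (∀ x ∈ Set.Ioc (1 - p) p,
      Filter.Tendsto (fun n : ℕ => (f₁ γ)^[n] x) Filter.atTop (nhds p)) ∧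
    (∀ x ∈ Set.Ico (1 - p) p,
      Filter.Tendsto (fun n : ℕ => (f₂ γ)^[n] x) Filter.atTop (nhds (1 - p))) := by
  obtain ⟨hp_half, hp_one, rfl⟩ := eq_mul_one_sub_of_eq_sqrt hγ hp
  have h₁ := fun x (hx : x ∈ Ioc (1 - p) p) ↦ tendsto_iterate_f₁ hp_half hp_one hx
  refine ⟨h₁, fun x hx ↦ ?_⟩
  simp_rw [iterate_f₂_eq]
  exact (h₁ (1 - x) ⟨by linarith [hx.2], by linarith [hx.1]⟩).const_sub 1
end
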